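/- arXiv:1908.07070 — 7 statements merged into one kernel-verified Lean document; each statement's English description precedes it below -/
import Mathlib

section
/- Let H be a symmetric real n×n matrix and g ∈ ℝⁿ. If λ ∈ ℝ and u ∈ ℝⁿ satisfy the KKT conditions (H − λI)u = g and uᵀu = 1, then λ is a solution of the quadratic eigenvalue problem, i.e. det(λ²I − 2λH + H² − g gᵀ) = 0. -/
/-!
With `A = H - λI`, the KKT equation reads `g = A u`, and since `A` is symmetric
`g gᵀ = A u uᵀ A`. Hence `λ²I - 2λH + H² - g gᵀ = A (I - u uᵀ) A`, and the middle factor has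
determinant `1 - uᵀu = 0` by the matrix determinant lemma.
-/

open Matrix

namespace Matrix

variable {n R : Type*} [Fintype n] [CommRing R]

theorem vecMulVec_mulVec_mulVec_of_isSymm {A : Matrix n n R} (hA : A.IsSymm) (u : n → R) :
    vecMulVec (A *ᵥ u) (A *ᵥ u) = A * vecMulVec u u * A := by
  rw [mul_vecMulVec, vecMulVec_mul, ← mulVec_transpose, hA.eq]

variable [DecidableEq n]

theorem det_one_sub_vecMulVec (u v : n → R) : (1 - vecMulVec u v).det = 1 - v ⬝ᵥ u := by
  rw [sub_eq_add_neg, ← neg_vecMulVec, vecMulVec_eq Unit,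
    det_one_add_replicateCol_mul_replicateRow, dotProduct_neg, sub_eq_add_neg]

theorem det_mul_self_sub_vecMulVec_eq_zero {A : Matrix n n R} (hA : A.IsSymm) {u : n → R}
    (hu : u ⬝ᵥ u = 1) : (A * A - vecMulVec (A *ᵥ u) (A *ᵥ u)).det = 0 := by
  have hfactor : A * A - vecMulVec (A *ᵥ u) (A *ᵥ u) = A * (1 - vecMulVec u u) * A := by
    rw [vecMulVec_mulVec_mulVec_of_isSymm hA, Matrix.mul_sub, Matrix.sub_mul, Matrix.mul_one]
  rw [hfactor, det_mul, det_mul, det_one_sub_vecMulVec, hu, sub_self, mul_zero, zero_mul]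

end Matrix

theorem stmt_0 (n : ℕ) (H : Matrix (Fin n) (Fin n) ℝ) (hH : H.IsSymm)
    (g : Fin n → ℝ) (lam : ℝ) (u : Fin n → ℝ)
    (hKKT : (H - lam • (1 : Matrix (Fin n) (Fin n) ℝ)).mulVec u = g)
    (hu : u ⬝ᵥ u = 1) :
    (lam ^ 2 • (1 : Matrix (Fin n) (Fin n) ℝ) - (2 * lam) • H + H ^ 2
      - vecMulVec g g).det = 0 := by
  set A := H - lam • (1 : Matrix (Fin n) (Fin n) ℝ)
  have hA : A.IsSymm := hH.sub (isSymm_one.smul lam)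
  have hsq : lam ^ 2 • (1 : Matrix (Fin n) (Fin n) ℝ) - (2 * lam) • H + H ^ 2 = A * A := by
    simp only [A, sq, sub_mul, mul_sub, smul_mul_assoc, mul_smul_comm, one_mul, mul_one]
    module
  rw [hsq, ← hKKT]
  exact det_mul_self_sub_vecMulVec_eq_zero hA hu
end

section
/- Let H be a symmetric real n×n matrix, g ∈ ℝⁿ, and λ ∈ ℝ such that H − λI is invertible. If there exists γ ≠ 0 with (λ²I − 2λH + H² − g gᵀ)γ = 0 (equivalently ((H − λI)² − g gᵀ)γ = 0), then the vector u = (H − λI)⁻¹ g satisfies (H − λI)u = g and uᵀu = 1. -/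
/-!
Write `M = H - λI`. The hypothesis says `M²γ = (g ⬝ᵥ γ) g`, so `γ = (g ⬝ᵥ γ) M⁻²g`, and the scalar
`g ⬝ᵥ γ` cannot vanish since `γ ≠ 0`. Taking the dot product with `g` gives `g ⬝ᵥ M⁻²g = 1`, and by
symmetry of `M` this is `‖M⁻¹g‖² = 1`.
-/

open Matrix

namespace Matrix

variable {ι : Type*} [Fintype ι] [DecidableEq ι]

theorem dotProduct_inv_mulVec_eq_one_of_sub_vecMulVec {K : Type*} [Field K]
    {A : Matrix ι ι K} (hA : IsUnit A) {g γ : ι → K} (hγ : γ ≠ 0)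
    (h : (A - vecMulVec g g) *ᵥ γ = 0) : g ⬝ᵥ (A⁻¹ *ᵥ g) = 1 := by
  have hAγ : A *ᵥ γ = (g ⬝ᵥ γ) • g := by
    rw [sub_mulVec, sub_eq_zero] at h
    rw [h, vecMulVec_mulVec, op_smul_eq_smul]
  have hγ_eq : γ = (g ⬝ᵥ γ) • (A⁻¹ *ᵥ g) := by
    rw [← mulVec_smul, ← hAγ, mulVec_mulVec,
      nonsing_inv_mul _ ((isUnit_iff_isUnit_det A).mp hA), one_mulVec]
  have hc : g ⬝ᵥ γ ≠ 0 := fun h0 => hγ (by rw [hγ_eq, h0, zero_smul])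
  refine mul_left_cancel₀ hc ?_
  calc (g ⬝ᵥ γ) * (g ⬝ᵥ (A⁻¹ *ᵥ g)) = g ⬝ᵥ γ := by
        conv_rhs => rw [hγ_eq]
        rw [dotProduct_smul, smul_eq_mul]
    _ = (g ⬝ᵥ γ) * 1 := (mul_one _).symm

theorem IsSymm.inv_mulVec_dotProduct_self {R : Type*} [CommRing R] {M : Matrix ι ι R}
    (hM : M.IsSymm) (v : ι → R) :
    (M⁻¹ *ᵥ v) ⬝ᵥ (M⁻¹ *ᵥ v) = v ⬝ᵥ ((M ^ 2)⁻¹ *ᵥ v) := by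
  rw [dotProduct_mulVec, ← mulVec_transpose, hM.inv.eq, mulVec_mulVec, ← sq, inv_pow',
    dotProduct_comm]

end Matrix

theorem stmt_1 (n : ℕ) (H : Matrix (Fin n) (Fin n) ℝ) (hH : H.IsSymm)
    (g : Fin n → ℝ) (lam : ℝ)
    (hinv : IsUnit (H - lam • (1 : Matrix (Fin n) (Fin n) ℝ)))
    (γ : Fin n → ℝ) (hγ : γ ≠ 0)
    (hQEP : ((H - lam • (1 : Matrix (Fin n) (Fin n) ℝ)) ^ 2 - vecMulVec g g).mulVec γ = 0) :
    (H - lam • (1 : Matrix (Fin n) (Fin n) ℝ)).mulVec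
        ((H - lam • (1 : Matrix (Fin n) (Fin n) ℝ))⁻¹.mulVec g) = g ∧
    ((H - lam • (1 : Matrix (Fin n) (Fin n) ℝ))⁻¹.mulVec g) ⬝ᵥ
        ((H - lam • (1 : Matrix (Fin n) (Fin n) ℝ))⁻¹.mulVec g) = 1 := by
  set M := H - lam • (1 : Matrix (Fin n) (Fin n) ℝ)
  have hM : M.IsSymm := hH.sub (isSymm_one.smul lam)
  refine ⟨?_, ?_⟩
  · rw [mulVec_mulVec, mul_nonsing_inv _ ((isUnit_iff_isUnit_det M).mp hinv), one_mulVec]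
  · rw [hM.inv_mulVec_dotProduct_self]
    exact dotProduct_inv_mulVec_eq_one_of_sub_vecMulVec (hinv.pow 2) hγ hQEP
end

section
/- Let H be a symmetric real n×n matrix, g ∈ ℝⁿ, λ ∈ ℝ, H − λI invertible, and γ ≠ 0 with ((H − λI)² − g gᵀ)γ = 0. Then gᵀγ ≠ 0, and after rescaling γ so that gᵀγ = 1, one has γ = (H − λI)⁻² g and gᵀ(H − λI)⁻² g = 1. -/
/-!
Since `g gᵀ γ = (gᵀγ) g`, the equation says `(H - λI)² γ = (gᵀγ) g`, so inverting `(H - λI)²`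
gives `γ = (gᵀγ) (H - λI)⁻² g`. As `γ ≠ 0`, the scalar `gᵀγ` cannot vanish; dividing by it gives
the second claim, and pairing with `g` gives the third.
-/

open Matrix

namespace Matrix

section RankOneKernel

variable {K n : Type*} [Field K] [Fintype n] [DecidableEq n] {A : Matrix n n K} {u v γ : n → K}

theorem eq_dotProduct_smul_inv_mulVec_of_sub_vecMulVec_mulVec_eq_zero (hA : IsUnit A)
    (h : (A - vecMulVec u v) *ᵥ γ = 0) : γ = (v ⬝ᵥ γ) • (A⁻¹ *ᵥ u) := by
  have hAγ : A *ᵥ γ = (v ⬝ᵥ γ) • u := by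
    rwa [sub_mulVec, sub_eq_zero, vecMulVec_mulVec, op_smul_eq_smul] at h
  calc γ = A⁻¹ *ᵥ (A *ᵥ γ) := by
        rw [mulVec_mulVec, nonsing_inv_mul A ((isUnit_iff_isUnit_det A).mp hA), one_mulVec]
    _ = (v ⬝ᵥ γ) • (A⁻¹ *ᵥ u) := by rw [hAγ, mulVec_smul]

theorem dotProduct_ne_zero_of_sub_vecMulVec_mulVec_eq_zero (hA : IsUnit A) (hγ : γ ≠ 0)
    (h : (A - vecMulVec u v) *ᵥ γ = 0) : v ⬝ᵥ γ ≠ 0 := by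
  intro hvγ
  apply hγ
  rw [eq_dotProduct_smul_inv_mulVec_of_sub_vecMulVec_mulVec_eq_zero hA h, hvγ, zero_smul]

theorem inv_dotProduct_smul_eq_inv_mulVec_of_sub_vecMulVec_mulVec_eq_zero (hA : IsUnit A)
    (hγ : γ ≠ 0) (h : (A - vecMulVec u v) *ᵥ γ = 0) : (v ⬝ᵥ γ)⁻¹ • γ = A⁻¹ *ᵥ u := by
  have hvγ := dotProduct_ne_zero_of_sub_vecMulVec_mulVec_eq_zero hA hγ h
  calc (v ⬝ᵥ γ)⁻¹ • γ = (v ⬝ᵥ γ)⁻¹ • ((v ⬝ᵥ γ) • (A⁻¹ *ᵥ u)) := by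
        rw [← eq_dotProduct_smul_inv_mulVec_of_sub_vecMulVec_mulVec_eq_zero hA h]
    _ = A⁻¹ *ᵥ u := inv_smul_smul₀ hvγ _

theorem dotProduct_inv_mulVec_eq_one_of_sub_vecMulVec_mulVec_eq_zero (hA : IsUnit A)
    (hγ : γ ≠ 0) (h : (A - vecMulVec u v) *ᵥ γ = 0) : v ⬝ᵥ (A⁻¹ *ᵥ u) = 1 := by
  have hvγ := dotProduct_ne_zero_of_sub_vecMulVec_mulVec_eq_zero hA hγ h
  rw [← inv_dotProduct_smul_eq_inv_mulVec_of_sub_vecMulVec_mulVec_eq_zero hA hγ h,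
    dotProduct_smul, smul_eq_mul, inv_mul_cancel₀ hvγ]

end RankOneKernel

end Matrix

theorem stmt_2_general (n : ℕ) (H : Matrix (Fin n) (Fin n) ℝ)
    (g : Fin n → ℝ) (lam : ℝ)
    (hinv : IsUnit (H - lam • (1 : Matrix (Fin n) (Fin n) ℝ)))
    (γ : Fin n → ℝ) (hγ : γ ≠ 0)
    (hQEP : ((H - lam • (1 : Matrix (Fin n) (Fin n) ℝ)) ^ 2 - vecMulVec g g).mulVec γ = 0) :
    g ⬝ᵥ γ ≠ 0 ∧
    (g ⬝ᵥ γ)⁻¹ • γ = (((H - lam • (1 : Matrix (Fin n) (Fin n) ℝ))⁻¹) ^ 2).mulVec g ∧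
    g ⬝ᵥ ((((H - lam • (1 : Matrix (Fin n) (Fin n) ℝ))⁻¹) ^ 2).mulVec g) = 1 := by
  have hsq := hinv.pow 2
  rw [inv_pow']
  exact ⟨dotProduct_ne_zero_of_sub_vecMulVec_mulVec_eq_zero hsq hγ hQEP,
    inv_dotProduct_smul_eq_inv_mulVec_of_sub_vecMulVec_mulVec_eq_zero hsq hγ hQEP,
    dotProduct_inv_mulVec_eq_one_of_sub_vecMulVec_mulVec_eq_zero hsq hγ hQEP⟩

theorem stmt_2 (n : ℕ) (H : Matrix (Fin n) (Fin n) ℝ) (hH : H.IsSymm)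
    (g : Fin n → ℝ) (lam : ℝ)
    (hinv : IsUnit (H - lam • (1 : Matrix (Fin n) (Fin n) ℝ)))
    (γ : Fin n → ℝ) (hγ : γ ≠ 0)
    (hQEP : ((H - lam • (1 : Matrix (Fin n) (Fin n) ℝ)) ^ 2 - vecMulVec g g).mulVec γ = 0) :
    g ⬝ᵥ γ ≠ 0 ∧
    (g ⬝ᵥ γ)⁻¹ • γ = (((H - lam • (1 : Matrix (Fin n) (Fin n) ℝ))⁻¹) ^ 2).mulVec g ∧
    g ⬝ᵥ ((((H - lam • (1 : Matrix (Fin n) (Fin n) ℝ))⁻¹) ^ 2).mulVec g) = 1 :=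
  stmt_2_general n H g lam hinv γ hγ hQEP
end

section
/- Let H be a real n×n matrix, g ∈ ℝⁿ, and λ a scalar. Then λ is an eigenvalue of the 2n×2n block matrix M = [[H, −I], [−g gᵀ, H]] if and only if there exists γ ≠ 0 with (λ²I − 2λH + H² − g gᵀ)γ = 0; moreover, if (γ, μ) is an eigenvector of M for λ, then μ = (H − λI)γ. -/
/-!
The first block row of `M (γ, μ) = λ (γ, μ)` says exactly `μ = (H - λ) γ`; substituting this
into the second row turns it into `((H - λ)² - g gᵀ) γ = 0`, and `(H - λ)²` expands to
`λ² - 2λH + H²`. Since `μ` is determined by `γ`, the eigenvector is nonzero iff `γ` is.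
-/

open Matrix

theorem Sum.smul_elim {α β R M : Type*} [SMul R M] (c : R) (u : α → M) (v : β → M) :
    c • Sum.elim u v = Sum.elim (c • u) (c • v) :=
  Sum.comp_elim (c • ·) u v

section

variable {ι R : Type*} [Fintype ι] [DecidableEq ι] [CommRing R]

theorem sub_smul_one_sq (A : Matrix ι ι R) (c : R) :
    (A - c • 1) ^ 2 = c ^ 2 • 1 - (2 * c) • A + A ^ 2 := by
  simp only [sq, sub_mul, mul_sub, Matrix.smul_mul, Matrix.mul_smul, mul_one, one_mul, smul_smul]
  module

theorem fromBlocks_neg_one_mulVec_elim_eq_smul_iff (A C : Matrix ι ι R) (c : R) (γ μ : ι → R) :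
    fromBlocks A (-1) C A *ᵥ Sum.elim γ μ = c • Sum.elim γ μ ↔
      μ = (A - c • 1) *ᵥ γ ∧ ((A - c • 1) ^ 2 + C) *ᵥ γ = 0 := by
  rw [fromBlocks_mulVec, Sum.elim_comp_inl, Sum.elim_comp_inr, Sum.smul_elim, Sum.elim_eq_iff]
  have hμ : A *ᵥ γ + (-1 : Matrix ι ι R) *ᵥ μ = c • γ ↔ μ = (A - c • 1) *ᵥ γ := by
    rw [sub_mulVec, smul_mulVec, one_mulVec, neg_mulVec, one_mulVec]
    constructor <;> intro h <;> linear_combination (norm := module) -h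
  rw [hμ]
  refine and_congr_right fun hμγ => ?_
  rw [sq, add_mulVec, ← mulVec_mulVec, ← hμγ, sub_mulVec, smul_mulVec, one_mulVec]
  constructor <;> intro h <;> linear_combination (norm := module) h

theorem exists_fromBlocks_neg_one_mulVec_eq_smul_iff (A C : Matrix ι ι R) (c : R) :
    (∃ x, x ≠ 0 ∧ fromBlocks A (-1) C A *ᵥ x = c • x) ↔
      ∃ γ, γ ≠ 0 ∧ ((A - c • 1) ^ 2 + C) *ᵥ γ = 0 := by
  constructor
  · rintro ⟨x, hx, hMx⟩
    rw [← Sum.elim_comp_inl_inr x, fromBlocks_neg_one_mulVec_elim_eq_smul_iff] at hMx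
    refine ⟨x ∘ Sum.inl, fun hγ => hx ?_, hMx.2⟩
    rw [← Sum.elim_comp_inl_inr x, hMx.1, hγ, mulVec_zero, Sum.elim_zero_zero]
  · rintro ⟨γ, hγ, hq⟩
    refine ⟨Sum.elim γ ((A - c • 1) *ᵥ γ), fun h => hγ ?_, ?_⟩
    · exact (Sum.elim_eq_iff.mp (h.trans Sum.elim_zero_zero.symm)).1
    · exact (fromBlocks_neg_one_mulVec_elim_eq_smul_iff A C c _ _).mpr ⟨rfl, hq⟩

end

theorem stmt_3 (n : ℕ) (H : Matrix (Fin n) (Fin n) ℝ) (g : Fin n → ℝ) (lam : ℝ) :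
    ((∃ x : Fin n ⊕ Fin n → ℝ, x ≠ 0 ∧
        (fromBlocks H (-1) (-(vecMulVec g g)) H).mulVec x = lam • x) ↔
      (∃ γ : Fin n → ℝ, γ ≠ 0 ∧
        (lam ^ 2 • (1 : Matrix (Fin n) (Fin n) ℝ) - (2 * lam) • H + H ^ 2
          - vecMulVec g g).mulVec γ = 0)) ∧
    (∀ γ μ : Fin n → ℝ, Sum.elim γ μ ≠ 0 →
      (fromBlocks H (-1) (-(vecMulVec g g)) H).mulVec (Sum.elim γ μ)
        = lam • Sum.elim γ μ →
      μ = (H - lam • (1 : Matrix (Fin n) (Fin n) ℝ)).mulVec γ) := by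
  refine ⟨?_, fun γ μ _ hMx => ((fromBlocks_neg_one_mulVec_elim_eq_smul_iff _ _ _ γ μ).mp hMx).1⟩
  rw [exists_fromBlocks_neg_one_mulVec_eq_smul_iff, sub_smul_one_sq, ← sub_eq_add_neg]
end

section
/- Let A be a real m×n matrix with n ≥ 1 and b ∈ ℝᵐ. Then there exist λ ∈ ℝ and u ∈ ℝⁿ with ‖u‖ = 1 such that AᵀA u − λ u = Aᵀ b and ‖Au − b‖ ≤ ‖Av − b‖ for every v with ‖v‖ = 1. -/
/-!
A minimiser `u` of `x ↦ ‖A x - b‖` on the compact unit sphere exists since `n ≥ 1`. By the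
Lagrange multiplier rule the gradient `2 Aᵀ (A u - b)` of `‖A x - b‖²` and the gradient `2 u` of
the constraint `‖x‖²` are linearly dependent; as `u ≠ 0`, this means `Aᵀ (A u - b) = λ u`.
-/

open Matrix

/-- The Euclidean norm of a vector in `ℝⁿ`. -/
noncomputable def euclNorm {k : ℕ} (x : Fin k → ℝ) : ℝ :=
  ‖(WithLp.equiv 2 (Fin k → ℝ)).symm x‖

open Metric

section

variable {E F : Type*} [NormedAddCommGroup E] [InnerProductSpace ℝ E] [CompleteSpace E]
  [NormedAddCommGroup F] [InnerProductSpace ℝ F] [CompleteSpace F]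

theorem IsLocalExtrOn.exists_eq_smul_of_hasStrictFDerivAt_innerSL {f : E → ℝ} {g u : E}
    (hu : u ≠ 0) (hextr : IsLocalExtrOn f (sphere 0 ‖u‖) u)
    (hf : HasStrictFDerivAt f (innerSL ℝ g) u) : ∃ μ : ℝ, g = μ • u := by
  have hextr' : IsLocalExtrOn f {x | ‖x‖ ^ 2 = ‖u‖ ^ 2} u := by
    convert hextr using 2
    ext x
    simp
  obtain ⟨a, c, hac, hsum⟩ :=
    hextr'.exists_multipliers_of_hasStrictFDerivAt_1d (hasStrictFDerivAt_norm_sq u) hf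
  have hvec : (a * 2) • u + c • g = 0 := by
    refine ext_inner_right ℝ fun w => ?_
    simpa [inner_add_left, real_inner_smul_left, mul_assoc] using congr($hsum w)
  have hc : c ≠ 0 := by
    rintro rfl
    have ha : a ≠ 0 := fun ha => hac (by simp [ha])
    simp_all
  refine ⟨-(a * 2) / c, ?_⟩
  rw [div_eq_inv_mul, mul_smul, eq_inv_smul_iff₀ hc, neg_smul, eq_neg_iff_add_eq_zero, add_comm,
    hvec]

theorem ContinuousLinearMap.hasStrictFDerivAt_norm_sub_sq (L : E →L[ℝ] F) (b : F) (u : E) :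
    HasStrictFDerivAt (fun x => ‖L x - b‖ ^ 2) (innerSL ℝ ((2 : ℝ) • L.adjoint (L u - b))) u := by
  refine ((hasStrictFDerivAt_norm_sq (L u - b)).comp u
    (L.hasStrictFDerivAt.sub_const b)).congr_fderiv ?_
  ext w
  simp [ContinuousLinearMap.adjoint_inner_left]

theorem ContinuousLinearMap.exists_adjoint_apply_sub_eq_smul_of_isMinOn_sphere (L : E →L[ℝ] F)
    (b : F) {u : E} (hu : u ≠ 0) (hmin : IsMinOn (fun x => ‖L x - b‖) (sphere 0 ‖u‖) u) :
    ∃ μ : ℝ, L.adjoint (L u - b) = μ • u := by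
  have hmin_sq : IsMinOn (fun x => ‖L x - b‖ ^ 2) (sphere 0 ‖u‖) u := fun x hx =>
    pow_le_pow_left₀ (norm_nonneg _) (hmin hx) 2
  obtain ⟨μ, hμ⟩ := IsLocalExtrOn.exists_eq_smul_of_hasStrictFDerivAt_innerSL hu
    (Or.inl hmin_sq.localize) (L.hasStrictFDerivAt_norm_sub_sq b u)
  exact ⟨μ / 2, by rw [div_eq_inv_mul, mul_smul, ← hμ, inv_smul_smul₀ two_ne_zero]⟩

end

theorem Matrix.adjoint_toContinuousLinearMap_toEuclideanLin {m n : Type*} [Fintype m] [Fintype n]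
    [DecidableEq n] [DecidableEq m] (A : Matrix m n ℝ) :
    (toEuclideanLin A).toContinuousLinearMap.adjoint =
      (toEuclideanLin Aᵀ).toContinuousLinearMap := by
  rw [← conjTranspose_eq_transpose_of_trivial, toEuclideanLin_conjTranspose_eq_adjoint]
  rfl

theorem stmt_5 (m n : ℕ) (hn : 1 ≤ n) (A : Matrix (Fin m) (Fin n) ℝ)
    (b : Fin m → ℝ) :
    ∃ (lam : ℝ) (u : Fin n → ℝ), euclNorm u = 1 ∧
      (Aᵀ * A).mulVec u - lam • u = Aᵀ.mulVec b ∧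
      ∀ v : Fin n → ℝ, euclNorm v = 1 →
        euclNorm (A.mulVec u - b) ≤ euclNorm (A.mulVec v - b) := by
  let L := (toEuclideanLin A).toContinuousLinearMap
  have : Nonempty (Fin n) := ⟨⟨0, hn⟩⟩
  obtain ⟨u, hu, hmin⟩ := (isCompact_sphere (0 : EuclideanSpace ℝ (Fin n)) 1).exists_isMinOn
    (NormedSpace.sphere_nonempty.2 zero_le_one)
    (by fun_prop : Continuous fun x => ‖L x - WithLp.toLp 2 b‖).continuousOn
  rw [mem_sphere_zero_iff_norm] at hu
  obtain ⟨lam, hlam⟩ := L.exists_adjoint_apply_sub_eq_smul_of_isMinOn_sphere (WithLp.toLp 2 b)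
    (norm_ne_zero_iff.1 (hu ▸ one_ne_zero)) (hu ▸ hmin)
  rw [adjoint_toContinuousLinearMap_toEuclideanLin] at hlam
  refine ⟨lam, WithLp.ofLp u, hu, ?_, fun v hv => hmin (by simpa [euclNorm] using hv)⟩
  have hnormal : Aᵀ *ᵥ (A *ᵥ WithLp.ofLp u - b) = lam • WithLp.ofLp u :=
    congrArg WithLp.ofLp hlam
  rw [← mulVec_mulVec, ← hnormal, mulVec_sub, sub_sub_cancel]
end

section
/- Let A be a real m×n matrix, b ∈ ℝᵐ, and suppose λ ∈ ℝ and u ∈ ℝⁿ satisfy (AᵀA − λI)u = Aᵀb and uᵀu = 1. Then for every v ∈ ℝⁿ with vᵀv = 1, ‖Av − b‖² − ‖Au − b‖² = (v − u)ᵀ(AᵀA − λI)(v − u). -/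
/-!
With `M = AᵀA - λI` and `Aᵀb = Mu`, completing the square gives, for every `v`,
`‖Av - b‖² = (v - u)ᵀM(v - u) + λ vᵀv + c` with `c` independent of `v`. Taking `v = u` identifies
`c`, and on the unit sphere the `λ vᵀv` terms cancel.
-/

open Matrix

lemma euclNorm_sq {k : ℕ} (x : Fin k → ℝ) : euclNorm x ^ 2 = x ⬝ᵥ x := by
  rw [euclNorm, EuclideanSpace.norm_eq, Real.sq_sqrt (by positivity)]
  simp [dotProduct, sq]

section CompletingTheSquare

variable {m n R : Type*} [Fintype m] [Fintype n] [DecidableEq n] [CommRing R]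

lemma dotProduct_gram_sub_smul_mulVec (A : Matrix m n R) (lam : R) (x y : n → R) :
    x ⬝ᵥ (Aᵀ * A - lam • 1) *ᵥ y = A *ᵥ x ⬝ᵥ A *ᵥ y - lam * (x ⬝ᵥ y) := by
  rw [sub_mulVec, dotProduct_sub, smul_mulVec, one_mulVec, dotProduct_smul, ← mulVec_mulVec,
    dotProduct_mulVec, vecMul_transpose, smul_eq_mul]

lemma dotProduct_self_mulVec_sub_eq_of_kkt (A : Matrix m n R) (b : m → R) (lam : R)
    (u : n → R) (hKKT : (Aᵀ * A - lam • 1) *ᵥ u = Aᵀ *ᵥ b) (v : n → R) :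
    (A *ᵥ v - b) ⬝ᵥ (A *ᵥ v - b)
      = (v - u) ⬝ᵥ (Aᵀ * A - lam • 1) *ᵥ (v - u) + lam * (v ⬝ᵥ v)
        + (b ⬝ᵥ b - u ⬝ᵥ (Aᵀ * A - lam • 1) *ᵥ u) := by
  have hlin (x : n → R) : x ⬝ᵥ (Aᵀ * A - lam • 1) *ᵥ u = A *ᵥ x ⬝ᵥ b := by
    rw [hKKT, dotProduct_mulVec, vecMul_transpose]
  have hsymm : u ⬝ᵥ (Aᵀ * A - lam • 1) *ᵥ v = v ⬝ᵥ (Aᵀ * A - lam • 1) *ᵥ u := by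
    rw [dotProduct_gram_sub_smul_mulVec, dotProduct_gram_sub_smul_mulVec, dotProduct_comm u,
      dotProduct_comm (A *ᵥ u)]
  simp only [mulVec_sub, sub_dotProduct, dotProduct_sub, hsymm, hlin]
  rw [dotProduct_gram_sub_smul_mulVec, dotProduct_comm b]
  ring

end CompletingTheSquare

theorem stmt_9 (m n : ℕ) (A : Matrix (Fin m) (Fin n) ℝ) (b : Fin m → ℝ)
    (lam : ℝ) (u : Fin n → ℝ)
    (hKKT : (Aᵀ * A - lam • (1 : Matrix (Fin n) (Fin n) ℝ)).mulVec u = Aᵀ.mulVec b)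
    (hu : u ⬝ᵥ u = 1) :
    ∀ v : Fin n → ℝ, v ⬝ᵥ v = 1 →
      euclNorm (A.mulVec v - b) ^ 2 - euclNorm (A.mulVec u - b) ^ 2
        = (v - u) ⬝ᵥ (Aᵀ * A - lam • (1 : Matrix (Fin n) (Fin n) ℝ)).mulVec (v - u) := by
  intro v hv
  rw [euclNorm_sq, euclNorm_sq, dotProduct_self_mulVec_sub_eq_of_kkt A b lam u hKKT v,
    dotProduct_self_mulVec_sub_eq_of_kkt A b lam u hKKT u, sub_self, zero_dotProduct, hu, hv]
  ring
end

section
/- Let A be a real m×n matrix, b ∈ ℝᵐ, and suppose λ ∈ ℝ and u ∈ ℝⁿ satisfy the KKT conditions (AᵀA − λI)u = Aᵀb and uᵀu = 1. If the matrix AᵀA − λI is positive semidefinite, then u is a global minimizer of the constrained least squares problem: ‖Au − b‖ ≤ ‖Av − b‖ for all v with ‖v‖ = 1. -/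
/-!
If `‖v‖ = ‖u‖`, substituting `Aᵀb = (AᵀA - λI)u` into the expansion of the squared residuals
gives `‖Av - b‖² - ‖Au - b‖² = (v - u)ᵀ(AᵀA - λI)(v - u)`, which is nonnegative by
positive semidefiniteness.
-/
open Matrix

lemma euclNorm_eq_sqrt {k : ℕ} (x : Fin k → ℝ) :
    euclNorm x = Real.sqrt (x ⬝ᵥ x) := by
  rw [euclNorm, EuclideanSpace.norm_eq]
  simp [dotProduct, sq]

namespace Matrix

variable {R : Type*} [CommRing R] {m n : Type*} [Fintype m] [Fintype n]

lemma dotProduct_transpose_mul_self_mulVec_comm (A : Matrix m n R) (x y : n → R) :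
    x ⬝ᵥ (Aᵀ * A) *ᵥ y = y ⬝ᵥ (Aᵀ * A) *ᵥ x := by
  rw [← dotProduct_transpose_mulVec, transpose_mul, transpose_transpose]

lemma residual_dotProduct_self (A : Matrix m n R) (b : m → R) (x : n → R) :
    (A *ᵥ x - b) ⬝ᵥ (A *ᵥ x - b) = x ⬝ᵥ (Aᵀ * A) *ᵥ x - 2 * (x ⬝ᵥ Aᵀ *ᵥ b) + b ⬝ᵥ b := by
  rw [← mulVec_mulVec, dotProduct_transpose_mulVec, dotProduct_transpose_mulVec]
  simp only [dotProduct_sub, sub_dotProduct]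
  rw [dotProduct_comm b]
  ring

lemma residual_dotProduct_self_sub_of_kkt [DecidableEq n] (A : Matrix m n R) (b : m → R)
    (lam : R) {u v : n → R} (hKKT : (Aᵀ * A - lam • (1 : Matrix n n R)) *ᵥ u = Aᵀ *ᵥ b)
    (huv : v ⬝ᵥ v = u ⬝ᵥ u) :
    (A *ᵥ v - b) ⬝ᵥ (A *ᵥ v - b) - (A *ᵥ u - b) ⬝ᵥ (A *ᵥ u - b) =
      (v - u) ⬝ᵥ (Aᵀ * A - lam • (1 : Matrix n n R)) *ᵥ (v - u) := by
  rw [residual_dotProduct_self, residual_dotProduct_self, ← hKKT]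
  simp only [sub_mulVec, smul_mulVec, one_mulVec, mulVec_sub, dotProduct_sub, sub_dotProduct,
    dotProduct_smul, smul_eq_mul]
  linear_combination lam * huv + dotProduct_transpose_mul_self_mulVec_comm A u v
    - lam * dotProduct_comm u v

end Matrix

theorem stmt_10 (m n : ℕ) (A : Matrix (Fin m) (Fin n) ℝ) (b : Fin m → ℝ)
    (lam : ℝ) (u : Fin n → ℝ)
    (hKKT : (Aᵀ * A - lam • (1 : Matrix (Fin n) (Fin n) ℝ)).mulVec u = Aᵀ.mulVec b)
    (hu : u ⬝ᵥ u = 1)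
    (hpsd : ∀ x : Fin n → ℝ,
      0 ≤ x ⬝ᵥ (Aᵀ * A - lam • (1 : Matrix (Fin n) (Fin n) ℝ)).mulVec x) :
    ∀ v : Fin n → ℝ, euclNorm v = 1 →
      euclNorm (A.mulVec u - b) ≤ euclNorm (A.mulVec v - b) := by
  intro v hv
  have hvv : v ⬝ᵥ v = u ⬝ᵥ u := by
    rw [euclNorm_eq_sqrt, Real.sqrt_eq_one] at hv
    rw [hv, hu]
  rw [euclNorm_eq_sqrt, euclNorm_eq_sqrt]
  apply Real.sqrt_le_sqrt
  linarith [residual_dotProduct_self_sub_of_kkt A b lam hKKT hvv, hpsd (v - u)]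
end
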